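/- If all vertex norms of d are equal, then every Original-DRESS updated value lies in [0, 2]: for every finite simple graph G and every symmetric nonnegative function d : V × V → ℝ with ‖u‖_d = ‖v‖_d > 0 for all vertices u, v, one has 0 ≤ F(d)(u,v) ≤ 2 for all u, v. -/

import Mathlib

open Finset

/-- The closed neighborhood `N[u] = N(u) ∪ {u}` of a vertex. -/
def closedNbhd {V : Type*} [Fintype V] [DecidableEq V]
    (G : SimpleGraph V) [DecidableRel G.Adj] (u : V) : Finset V :=
  insert u (G.neighborFinset u)

/-- The vertex norm `‖u‖_d = sqrt (∑_{x ∈ N[u]} d u x)`. -/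
noncomputable def vnorm {V : Type*} [Fintype V] [DecidableEq V]
    (G : SimpleGraph V) [DecidableRel G.Adj] (d : V → V → ℝ) (u : V) : ℝ :=
  Real.sqrt (∑ x ∈ closedNbhd G u, d u x)

/-- The Original-DRESS update operator. -/
noncomputable def dress {V : Type*} [Fintype V] [DecidableEq V]
    (G : SimpleGraph V) [DecidableRel G.Adj] (d : V → V → ℝ) (u v : V) : ℝ :=
  (∑ x ∈ closedNbhd G u ∩ closedNbhd G v, (d u x + d x v)) /
    (vnorm G d u * vnorm G d v)

/-! Each half of the numerator of `F(d)(u,v)` is a partial sum of `‖u‖²` resp. `‖v‖²`, so the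
numerator is at most `‖u‖² + ‖v‖²`, which equals `2 ‖u‖ ‖v‖` when the two norms agree. -/

section

variable {V : Type*} [Fintype V] [DecidableEq V] (G : SimpleGraph V) [DecidableRel G.Adj]
  {d : V → V → ℝ}

theorem vnorm_sq (hnonneg : ∀ u v, 0 ≤ d u v) (u : V) :
    vnorm G d u ^ 2 = ∑ x ∈ closedNbhd G u, d u x :=
  Real.sq_sqrt (sum_nonneg fun x _ => hnonneg u x)

theorem dress_nonneg (hnonneg : ∀ u v, 0 ≤ d u v) (u v : V) : 0 ≤ dress G d u v :=
  div_nonneg (sum_nonneg fun x _ => add_nonneg (hnonneg u x) (hnonneg x v))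
    (mul_nonneg (Real.sqrt_nonneg _) (Real.sqrt_nonneg _))

theorem sum_inter_closedNbhd_le_vnorm_sq_add (hsym : ∀ u v, d u v = d v u)
    (hnonneg : ∀ u v, 0 ≤ d u v) (u v : V) :
    ∑ x ∈ closedNbhd G u ∩ closedNbhd G v, (d u x + d x v) ≤
      vnorm G d u ^ 2 + vnorm G d v ^ 2 := by
  have hu : ∑ x ∈ closedNbhd G u ∩ closedNbhd G v, d u x ≤ ∑ x ∈ closedNbhd G u, d u x :=
    sum_le_sum_of_subset_of_nonneg inter_subset_left fun x _ _ => hnonneg u x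
  have hv : ∑ x ∈ closedNbhd G u ∩ closedNbhd G v, d x v ≤ ∑ x ∈ closedNbhd G v, d v x := by
    simp only [hsym _ v]
    exact sum_le_sum_of_subset_of_nonneg inter_subset_right fun x _ _ => hnonneg v x
  rw [sum_add_distrib, vnorm_sq G hnonneg, vnorm_sq G hnonneg]
  exact add_le_add hu hv

theorem dress_le_two_of_vnorm_eq (hsym : ∀ u v, d u v = d v u)
    (hnonneg : ∀ u v, 0 ≤ d u v) {u v : V} (huv : vnorm G d u = vnorm G d v) :
    dress G d u v ≤ 2 := by
  refine div_le_of_le_mul₀ (mul_nonneg (Real.sqrt_nonneg _) (Real.sqrt_nonneg _))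
    zero_le_two ?_
  calc ∑ x ∈ closedNbhd G u ∩ closedNbhd G v, (d u x + d x v)
      ≤ vnorm G d u ^ 2 + vnorm G d v ^ 2 := sum_inter_closedNbhd_le_vnorm_sq_add G hsym hnonneg u v
    _ = 2 * (vnorm G d u * vnorm G d v) := by rw [huv]; ring

end

theorem dress_range_of_equal_norms_general {V : Type*} [Fintype V] [DecidableEq V]
    (G : SimpleGraph V) [DecidableRel G.Adj] (d : V → V → ℝ)
    (hsym : ∀ u v, d u v = d v u)
    (hnonneg : ∀ u v, 0 ≤ d u v)
    (hnormeq : ∀ u v, vnorm G d u = vnorm G d v) :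
    ∀ u v, 0 ≤ dress G d u v ∧ dress G d u v ≤ 2 := fun u v =>
  ⟨dress_nonneg G hnonneg u v, dress_le_two_of_vnorm_eq G hsym hnonneg (hnormeq u v)⟩

/-- If all vertex norms of `d` are equal (and positive), then every
Original-DRESS updated value lies in `[0, 2]`. -/
theorem dress_range_of_equal_norms {V : Type*} [Fintype V] [DecidableEq V]
    (G : SimpleGraph V) [DecidableRel G.Adj] (d : V → V → ℝ)
    (hsym : ∀ u v, d u v = d v u)
    (hnonneg : ∀ u v, 0 ≤ d u v)
    (hnormpos : ∀ u, 0 < vnorm G d u)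
    (hnormeq : ∀ u v, vnorm G d u = vnorm G d v) :
    ∀ u v, 0 ≤ dress G d u v ∧ dress G d u v ≤ 2 :=
  dress_range_of_equal_norms_general G d hsym hnonneg hnormeq
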